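/- arXiv:1610.05056 — 2 statements merged into one kernel-verified Lean document; each statement's English description precedes it below -/
import Mathlib

section
/- Assume a = a(ρ) ∈ (0, 1] and ρ > 0. Let (f(t))_{t≥0} be a weak solution of the spatially homogeneous Boltzmann-type model with initial datum f₀ of total mass ρ, set θ̄₀ := (1/ρ)∫_I |θ − α_d| f₀(dθ) and θ̄(t) := (1/ρ)∫_I |θ − α_d| f(t)(dθ), and define λ := a(1 + 2|α_c|/π) − 1 and μ := a/π. If 0 < θ̄₀ < π(1/a − 1) and |α_c| ≤ (π/2)(1/a − 1) − θ̄₀/2, then for all t ≥ 0 one has θ̄(t) ≤ |λ|θ̄₀ / ((|λ| − μθ̄₀)e^{|λ|ρt} + μθ̄₀). -/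
/-!
`|θ - α_d|` is not `2π`-periodic, so the weak formulation is tested against the periodic distance
`ψ(θ) = arccos (cos (θ - α_d))`, which agrees with `|θ - α_d|` on `I`. Since
`𝒞(θ, φ) - α_d = P(θ, φ) (θ - α_d + α_c)` and `P(θ, φ) ≤ (a/π) (|θ - α_d| + |φ - α_d|)`, integrating
against `f ⊗ f` turns the weak formulation into the Riccati inequality `θ̄' ≤ ρ (λ θ̄ + μ θ̄²)`, and
the assumption on `α_c` makes `λ ≤ -μ θ̄₀ < 0`. A fencing argument then compares `θ̄` with the
explicit solution of the Riccati equation starting at `θ̄₀`.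
-/

open MeasureTheory Real Filter
open scoped Real

/-- The angular collision-probability profile `𝒢(s) = (1/π)·min{s, 2π−s}`. -/
noncomputable def Gfun (s : ℝ) : ℝ := (1 / π) * min s (2 * π - s)

/-- The collision probability `P(θ⁎, φ⁎) = a·𝒢(|θ⁎ − φ⁎|)`. -/
noncomputable def Pcoll (a θ φ : ℝ) : ℝ := a * Gfun |θ - φ|

/-- The post-interaction angle
`𝒞(θ⁎, φ⁎) = θ⁎ + (1 − P(θ⁎, φ⁎))(α_d − θ⁎) + P(θ⁎, φ⁎)·α_c`. -/
noncomputable def Cpost (a αd αc θ φ : ℝ) : ℝ :=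
  θ + (1 - Pcoll a θ φ) * (αd - θ) + Pcoll a θ φ * αc

open Set
open scoped Topology

noncomputable def angularDist (α x : ℝ) : ℝ := arccos (cos (x - α))

section AngularDist

variable (α : ℝ)

@[fun_prop]
theorem continuous_angularDist : Continuous (angularDist α) := by
  unfold angularDist; fun_prop

theorem angularDist_nonneg (x : ℝ) : 0 ≤ angularDist α x := arccos_nonneg _

theorem angularDist_le_pi (x : ℝ) : angularDist α x ≤ π := arccos_le_pi _

theorem abs_angularDist_le (x : ℝ) : |angularDist α x| ≤ π := by
  rw [abs_of_nonneg (angularDist_nonneg α x)]; exact angularDist_le_pi α x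

theorem angularDist_add_two_pi (x : ℝ) : angularDist α (x + 2 * π) = angularDist α x := by
  simp [angularDist, add_sub_right_comm]

variable {α}

theorem angularDist_eq_abs {x : ℝ} (h : |x - α| ≤ π) : angularDist α x = |x - α| := by
  rw [angularDist, ← cos_abs, arccos_cos (abs_nonneg _) h]

theorem angularDist_le_abs (x : ℝ) : angularDist α x ≤ |x - α| := by
  rcases le_total |x - α| π with h | h
  · exact (angularDist_eq_abs h).le
  · exact (angularDist_le_pi α x).trans h

theorem integral_angularDist_eq_integral_abs {ν : Measure ℝ}
    (hsupp : ν (Ico (-π + α) (π + α))ᶜ = 0) :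
    ∫ θ, angularDist α θ ∂ν = ∫ θ, |θ - α| ∂ν := by
  refine integral_congr_ae ?_
  filter_upwards [mem_ae_iff.2 hsupp] with x hx
  exact angularDist_eq_abs (abs_le.2 ⟨by linarith [hx.1], by linarith [hx.2]⟩)

theorem integrable_angularDist {ν : Measure ℝ} [IsFiniteMeasure ν] :
    Integrable (angularDist α) ν :=
  .of_bound (continuous_angularDist α).aestronglyMeasurable π <|
    ae_of_all _ (abs_angularDist_le α)

end AngularDist

section Collision

variable {a αd αc θ φ : ℝ}

theorem Pcoll_nonneg (ha : 0 ≤ a) (h : |θ - φ| ≤ 2 * π) : 0 ≤ Pcoll a θ φ := by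
  unfold Pcoll Gfun
  have := le_min (abs_nonneg (θ - φ)) (sub_nonneg.2 h)
  positivity

theorem Pcoll_le (ha : 0 ≤ a) : Pcoll a θ φ ≤ a / π * |θ - φ| := by
  unfold Pcoll Gfun
  calc a * (1 / π * min |θ - φ| (2 * π - |θ - φ|)) = a / π * min |θ - φ| (2 * π - |θ - φ|) := by
        ring
    _ ≤ a / π * |θ - φ| := by gcongr; exact min_le_left _ _

theorem Cpost_sub : Cpost a αd αc θ φ - αd = Pcoll a θ φ * (θ - αd + αc) := by
  unfold Cpost; ring

theorem angularDist_Cpost_le (ha : 0 ≤ a) (hθ : |θ - αd| ≤ π) (hφ : |φ - αd| ≤ π) :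
    angularDist αd (Cpost a αd αc θ φ) ≤ a / π * (|θ - αd| + |φ - αd|) * (|θ - αd| + |αc|) := by
  have hθφ : |θ - φ| ≤ |θ - αd| + |φ - αd| := abs_sub_comm φ αd ▸ abs_sub_le θ αd φ
  have hP : 0 ≤ Pcoll a θ φ := Pcoll_nonneg ha (by linarith)
  calc angularDist αd (Cpost a αd αc θ φ) ≤ |Cpost a αd αc θ φ - αd| := angularDist_le_abs _
    _ = Pcoll a θ φ * |θ - αd + αc| := by rw [Cpost_sub, abs_mul, abs_of_nonneg hP]
    _ ≤ a / π * (|θ - αd| + |φ - αd|) * (|θ - αd| + |αc|) := by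
        gcongr
        · exact (Pcoll_le ha).trans (by gcongr)
        · exact abs_add_le _ _

theorem angularDist_Cpost_sub_le (ha : 0 ≤ a) (hθ : |θ - αd| ≤ π) (hφ : |φ - αd| ≤ π) :
    angularDist αd (Cpost a αd αc θ φ) - angularDist αd θ ≤
      (a * (1 + 2 * |αc| / π) - 1) * angularDist αd θ
        + a / π * |αc| * (angularDist αd φ - angularDist αd θ)
        + a / π * (angularDist αd θ * angularDist αd φ) := by
  have hC := angularDist_Cpost_le (αc := αc) ha hθ hφ
  rw [angularDist_eq_abs hθ, angularDist_eq_abs hφ]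
  have hsq : a / π * |θ - αd| ^ 2 ≤ a * |θ - αd| := by
    calc a / π * |θ - αd| ^ 2 ≤ a / π * (|θ - αd| * π) := by
          gcongr; nlinarith [abs_nonneg (θ - αd)]
      _ = a * |θ - αd| := by field_simp
  linear_combination hC + hsq

variable {ν : Measure ℝ} [IsFiniteMeasure ν]

theorem integral_integral_angularDist_Cpost_sub_le (ha : 0 ≤ a)
    (hsupp : ν (Ico (-π + αd) (π + αd))ᶜ = 0) :
    ∫ θ, ∫ φ, (angularDist αd (Cpost a αd αc θ φ) - angularDist αd θ) ∂ν ∂ν ≤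
      ν.real univ * (a * (1 + 2 * |αc| / π) - 1) * ∫ θ, angularDist αd θ ∂ν
        + a / π * (∫ θ, angularDist αd θ ∂ν) ^ 2 := by
  set ψ := angularDist αd
  have hI : ∀ᵐ x ∂ν, |x - αd| ≤ π := by
    filter_upwards [mem_ae_iff.2 hsupp] with x hx
    exact abs_le.2 ⟨by linarith [hx.1], by linarith [hx.2]⟩
  have hψ : Integrable ψ ν := integrable_angularDist
  have hcont : Continuous fun p : ℝ × ℝ => ψ (Cpost a αd αc p.1 p.2) - ψ p.1 := by
    unfold Cpost Pcoll Gfun; fun_prop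
  have hint : Integrable (fun p : ℝ × ℝ => ψ (Cpost a αd αc p.1 p.2) - ψ p.1) (ν.prod ν) :=
    .of_bound hcont.aestronglyMeasurable π <| ae_of_all _ fun p => by
      rw [Real.norm_eq_abs, abs_le]
      constructor <;> linarith [angularDist_nonneg αd (Cpost a αd αc p.1 p.2),
        angularDist_le_pi αd (Cpost a αd αc p.1 p.2), angularDist_nonneg αd p.1,
        angularDist_le_pi αd p.1]
  have h₁ : Integrable (fun p : ℝ × ℝ => ψ p.1) (ν.prod ν) := hψ.comp_fst ν
  have h₂ : Integrable (fun p : ℝ × ℝ => ψ p.2) (ν.prod ν) := hψ.comp_snd ν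
  have h₂₁ : Integrable (fun p : ℝ × ℝ => ψ p.2 - ψ p.1) (ν.prod ν) := h₂.sub h₁
  have h₁₂ : Integrable (fun p : ℝ × ℝ => ψ p.1 * ψ p.2) (ν.prod ν) := hψ.mul_prod hψ
  rw [← integral_prod _ hint]
  calc ∫ p, ψ (Cpost a αd αc p.1 p.2) - ψ p.1 ∂ν.prod ν
      ≤ ∫ p, ((a * (1 + 2 * |αc| / π) - 1) * ψ p.1 + a / π * |αc| * (ψ p.2 - ψ p.1)
          + a / π * (ψ p.1 * ψ p.2)) ∂ν.prod ν := by
        refine integral_mono_ae hint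
          (((h₁.const_mul _).add (h₂₁.const_mul _)).add (h₁₂.const_mul _)) ?_
        filter_upwards [Measure.quasiMeasurePreserving_fst.ae hI,
          Measure.quasiMeasurePreserving_snd.ae hI] with p hθ hφ
        exact angularDist_Cpost_sub_le ha hθ hφ
    _ = _ := by
        rw [integral_add (by exact (h₁.const_mul _).add (h₂₁.const_mul _)) (h₁₂.const_mul _),
          integral_add (h₁.const_mul _) (h₂₁.const_mul _), integral_const_mul,
          integral_const_mul, integral_const_mul, integral_sub h₂ h₁, integral_fun_fst,
          integral_fun_snd, integral_prod_mul, smul_eq_mul]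
        ring

end Collision

theorem image_le_ode_solution_of_deriv_right_le {f f' g φ : ℝ → ℝ} {a b K : ℝ}
    (hf : ContinuousOn f (Icc a b)) (hf' : ∀ x ∈ Ico a b, HasDerivWithinAt f (f' x) (Ici x) x)
    (hg : ∀ x, HasDerivAt g (φ (g x)) x) (hf'φ : ∀ x ∈ Ico a b, f' x ≤ φ (f x))
    (hφ : ∀ x ∈ Ico a b, g x ≤ f x → φ (f x) - φ (g x) ≤ K * (f x - g x))
    (ha : f a ≤ g a) : ∀ ⦃x⦄, x ∈ Icc a b → f x ≤ g x := by
  intro x hx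
  -- fence `f` by the strict barriers `g + δ e^{(K+1)s}`, then let `δ → 0`
  have hbarrier : ∀ δ > 0, f x ≤ g x + δ * exp ((K + 1) * x) := by
    intro δ hδ
    have hE : ∀ s, HasDerivAt (fun s => exp ((K + 1) * s)) (exp ((K + 1) * s) * (K + 1)) s :=
      fun s => by simpa using ((hasDerivAt_id s).const_mul (K + 1)).exp
    refine image_le_of_deriv_right_lt_deriv_boundary (B := fun s => g s + δ * exp ((K + 1) * s))
      hf hf' (by nlinarith [exp_pos ((K + 1) * a)])
      (fun s => (hg s).add ((hE s).const_mul δ)) ?_ hx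
    intro s hs hfs
    have hpos : 0 < δ * exp ((K + 1) * s) := by positivity
    have hgap : f s - g s = δ * exp ((K + 1) * s) := by linarith
    have hlip := hφ s hs (by linarith)
    rw [hgap] at hlip
    linarith [hf'φ s hs]
  have hlim : Tendsto (fun δ => g x + δ * exp ((K + 1) * x)) (𝓝[>] 0) (𝓝 (g x)) :=
    ((continuous_const.add (continuous_id.mul continuous_const)).tendsto' 0 _
      (by simp)).mono_left nhdsWithin_le_nhds
  exact ge_of_tendsto hlim (eventually_nhdsWithin_of_forall hbarrier)

noncomputable def riccatiSolution (L c x₀ r t : ℝ) : ℝ :=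
  L * x₀ / ((L - c * x₀) * exp (L * r * t) + c * x₀)

section Riccati

variable {L c x₀ r : ℝ}

theorem riccatiSolution_zero (hL : L ≠ 0) : riccatiSolution L c x₀ r 0 = x₀ := by
  simp [riccatiSolution, hL]

theorem hasDerivAt_riccatiSolution (hden : ∀ t, (L - c * x₀) * exp (L * r * t) + c * x₀ ≠ 0)
    (t : ℝ) : HasDerivAt (riccatiSolution L c x₀ r)
      (r * (c * riccatiSolution L c x₀ r t ^ 2 - L * riccatiSolution L c x₀ r t)) t := by
  have hE : HasDerivAt (fun u => exp (L * r * u)) (exp (L * r * t) * (L * r)) t := by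
    simpa using ((hasDerivAt_id t).const_mul (L * r)).exp
  refine ((hasDerivAt_const t (L * x₀)).div ((hE.const_mul (L - c * x₀)).add_const (c * x₀))
    (hden t)).congr_deriv ?_
  have := hden t
  simp only [riccatiSolution]
  field_simp
  ring

theorem le_riccatiSolution {F F' : ℝ → ℝ} (hr : 0 ≤ r) (hc : 0 < c) (hx₀ : 0 < x₀)
    (hL : c * x₀ ≤ L) (hF : ∀ t, 0 ≤ t → HasDerivAt F (F' t) t)
    (hF' : ∀ t, 0 ≤ t → F' t ≤ r * (c * F t ^ 2 - L * F t)) (hF0 : F 0 = x₀) {t : ℝ}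
    (ht : 0 ≤ t) : F t ≤ riccatiSolution L c x₀ r t := by
  have hFc : ContinuousOn F (Icc 0 t) := fun s hs => (hF s hs.1).continuousAt.continuousWithinAt
  obtain ⟨M, hM⟩ := isCompact_Icc.bddAbove_image hFc
  have hcx₀ := mul_pos hc hx₀
  have hden : ∀ s, 0 < (L - c * x₀) * exp (L * r * s) + c * x₀ := fun s => by
    nlinarith [exp_pos (L * r * s)]
  refine image_le_ode_solution_of_deriv_right_le (φ := fun y => r * (c * y ^ 2 - L * y))
    (K := r * c * 2 * M) hFc (fun s hs => (hF s hs.1).hasDerivWithinAt)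
    (hasDerivAt_riccatiSolution fun s => (hden s).ne') (fun s hs => hF' s hs.1) ?_
    (by rw [hF0, riccatiSolution_zero (by linarith)]) ⟨ht, le_rfl⟩
  intro s hs hgF
  set g := riccatiSolution L c x₀ r s
  have hFM : F s ≤ M := hM ⟨s, Ico_subset_Icc_self hs, rfl⟩
  have hgap : 0 ≤ r * (F s - g) := mul_nonneg hr (sub_nonneg.2 hgF)
  calc r * (c * F s ^ 2 - L * F s) - r * (c * g ^ 2 - L * g)
      = r * (F s - g) * (c * (F s + g) - L) := by ring
    _ ≤ r * (F s - g) * (c * (2 * M)) := mul_le_mul_of_nonneg_left (by nlinarith) hgap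
    _ = r * c * 2 * M * (F s - g) := by ring

end Riccati

theorem stmt_2_general (αd αc : ℝ)
    (ρ a : ℝ) (hρ : 0 < ρ) (ha : 0 < a)
    (f : ℝ → Measure ℝ)
    (hsupp : ∀ t, 0 ≤ t → f t (Set.Ico (-π + αd) (π + αd))ᶜ = 0)
    (hmass : ∀ t, 0 ≤ t → f t Set.univ = ENNReal.ofReal ρ)
    -- weak formulation of the spatially homogeneous Boltzmann-type model:
    (hweak : ∀ ψ : ℝ → ℝ, Measurable ψ → (∃ M, ∀ x, |ψ x| ≤ M) →
      (∀ x, ψ (x + 2 * π) = ψ x) → ∀ t, 0 ≤ t →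
      HasDerivAt (fun s => ∫ θ, ψ θ ∂(f s))
        (∫ θ, ∫ φ, (ψ (Cpost a αd αc θ φ) - ψ θ) ∂(f t) ∂(f t)) t)
    (θbar : ℝ → ℝ) (hθbar : ∀ t, θbar t = (1 / ρ) * ∫ θ, |θ - αd| ∂(f t))
    (θbar0 : ℝ) (hθbar0 : θbar0 = θbar 0)
    (lam mu : ℝ) (hlam : lam = a * (1 + 2 * |αc| / π) - 1) (hmu : mu = a / π)
    (h0 : 0 < θbar0)
    (h2 : |αc| ≤ (π / 2) * (1 / a - 1) - θbar0 / 2) :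
    ∀ t, 0 ≤ t →
      θbar t ≤ |lam| * θbar0 / ((|lam| - mu * θbar0) * Real.exp (|lam| * ρ * t) + mu * θbar0) := by
  intro t ht
  have hmu0 : 0 < mu := hmu ▸ div_pos ha pi_pos
  have hlam_le : lam ≤ -(mu * θbar0) :=
    calc lam = a - 1 + 2 * a / π * |αc| := by rw [hlam]; ring
      _ ≤ a - 1 + 2 * a / π * ((π / 2) * (1 / a - 1) - θbar0 / 2) := by gcongr
      _ = -(mu * θbar0) := by rw [hmu]; field_simp; ring
  have hL : |lam| = -lam := abs_of_neg (by nlinarith [mul_pos hmu0 h0])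
  set F := fun s => 1 / ρ * ∫ θ, angularDist αd θ ∂f s
  have hθF : ∀ s, 0 ≤ s → θbar s = F s := fun s hs => by
    rw [hθbar, ← integral_angularDist_eq_integral_abs (hsupp s hs)]
  have hF' : ∀ s, 0 ≤ s → 1 / ρ * ∫ θ, ∫ φ, (angularDist αd (Cpost a αd αc θ φ) -
      angularDist αd θ) ∂f s ∂f s ≤ ρ * (mu * F s ^ 2 - |lam| * F s) := fun s hs => by
    have : IsFiniteMeasure (f s) := ⟨by simp [hmass s hs]⟩
    have hD := integral_integral_angularDist_Cpost_sub_le (αc := αc) ha.le (hsupp s hs)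
    rw [measureReal_def, hmass s hs, ENNReal.toReal_ofReal hρ.le, ← hlam, ← hmu] at hD
    calc _ ≤ 1 / ρ * (ρ * lam * ∫ θ, angularDist αd θ ∂f s
            + mu * (∫ θ, angularDist αd θ ∂f s) ^ 2) := by gcongr
      _ = _ := by simp only [F, hL]; field_simp; ring
  rw [hθF t ht]
  exact le_riccatiSolution hρ.le hmu0 h0 (by linarith)
    (fun s hs => (hweak _ (continuous_angularDist αd).measurable ⟨π, abs_angularDist_le αd⟩
      (angularDist_add_two_pi αd) s hs).const_mul (1 / ρ))
    hF' ((hθF 0 le_rfl).symm.trans hθbar0.symm) ht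

/-- Quantitative decay estimate for `θ̄(t)` along weak solutions of the spatially
homogeneous Boltzmann-type model: with `λ = a(1 + 2|α_c|/π) − 1` and `μ = a/π`,
`θ̄(t) ≤ |λ|θ̄₀ / ((|λ| − μθ̄₀)e^{|λ|ρt} + μθ̄₀)`. -/
theorem stmt_2 (αd αc : ℝ) (hαd : αd ∈ Set.Ico (-π) π) (hαc : αc ∈ Set.Ico (-π) π)
    (ρ a : ℝ) (hρ : 0 < ρ) (hρ1 : ρ ≤ 1) (ha : 0 < a) (ha1 : a ≤ 1)
    (f : ℝ → Measure ℝ)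
    (hsupp : ∀ t, 0 ≤ t → f t (Set.Ico (-π + αd) (π + αd))ᶜ = 0)
    (hmass : ∀ t, 0 ≤ t → f t Set.univ = ENNReal.ofReal ρ)
    -- weak formulation of the spatially homogeneous Boltzmann-type model:
    (hweak : ∀ ψ : ℝ → ℝ, Measurable ψ → (∃ M, ∀ x, |ψ x| ≤ M) →
      (∀ x, ψ (x + 2 * π) = ψ x) → ∀ t, 0 ≤ t →
      HasDerivAt (fun s => ∫ θ, ψ θ ∂(f s))
        (∫ θ, ∫ φ, (ψ (Cpost a αd αc θ φ) - ψ θ) ∂(f t) ∂(f t)) t)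
    (θbar : ℝ → ℝ) (hθbar : ∀ t, θbar t = (1 / ρ) * ∫ θ, |θ - αd| ∂(f t))
    (θbar0 : ℝ) (hθbar0 : θbar0 = θbar 0)
    (lam mu : ℝ) (hlam : lam = a * (1 + 2 * |αc| / π) - 1) (hmu : mu = a / π)
    (h0 : 0 < θbar0) (h1 : θbar0 < π * (1 / a - 1))
    (h2 : |αc| ≤ (π / 2) * (1 / a - 1) - θbar0 / 2) :
    ∀ t, 0 ≤ t →
      θbar t ≤ |lam| * θbar0 / ((|lam| - mu * θbar0) * Real.exp (|lam| * ρ * t) + mu * θbar0) :=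
  stmt_2_general αd αc ρ a hρ ha f hsupp hmass hweak θbar hθbar θbar0 hθbar0 lam mu hlam hmu h0 h2
end

section
/- Assume a = a(ρ) ∈ (0, 1] and that the deviation angle satisfies |α_c| < π(1/a − 2). Let f₀ be a positive Borel measure on I of total mass ρ > 0 and assume that for every θ ∈ I the characteristic t ↦ γ_t(θ) is a C¹ solution taking values in I. Then for every θ ∈ I, |γ_t(θ) − α_d| → 0 as t → +∞. -/
open MeasureTheory Real Filter
open scoped Real

/-!
Write `x_θ = γ_t(θ) − α_d`, so that `x_θ' = −ρ x_θ + F_θ` with `F_θ` the alignment term. If at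
time `t` all pairwise distances `|γ_t(θ) − γ_t(φ)|` are at most `R`, then `|F_θ|` and
`|F_θ − F_φ|` are at most `q ρ R` with `q = a (2π + |α_c|) / π`, because `𝒢` is `1/π`-Lipschitz,
vanishes at `0` and is bounded by `1`; the hypothesis on `α_c` says exactly `q < 1`. The linear
equation `v' = −ρ v + F` forgets its initial value exponentially fast, so `|v|` ends up below
`sup |F| / ρ + ε`. Applied to `v = x_θ − x_φ` this shrinks the diameter of the configuration from
`R` to any `q' R` with `q < q' < 1`; iterating, the diameter tends to `0`, and applied to `v = x_θ`
it then forces `x_θ → 0`.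
-/

lemma Gfun_nonneg {s : ℝ} (h0 : 0 ≤ s) (h2 : s ≤ 2 * π) : 0 ≤ Gfun s :=
  mul_nonneg (by positivity) (le_min h0 (by linarith))

lemma Gfun_le_one (s : ℝ) : Gfun s ≤ 1 := by
  have h : min s (2 * π - s) ≤ π := by
    rcases le_total s π with h | h
    · exact (min_le_left _ _).trans h
    · exact (min_le_right _ _).trans (by linarith)
  calc Gfun s ≤ (1 / π) * π := mul_le_mul_of_nonneg_left h (by positivity)
    _ = 1 := by field_simp

lemma Gfun_le_div_pi (s : ℝ) : Gfun s ≤ s / π := by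
  calc Gfun s ≤ (1 / π) * s := mul_le_mul_of_nonneg_left (min_le_left _ _) (by positivity)
    _ = s / π := by ring

lemma abs_Gfun_sub_le (s t : ℝ) : |Gfun s - Gfun t| ≤ |s - t| / π := by
  have h : |min s (2 * π - s) - min t (2 * π - t)| ≤ |s - t| := by
    refine (abs_min_sub_min_le_max _ _ _ _).trans (max_le le_rfl ?_)
    rw [show 2 * π - s - (2 * π - t) = -(s - t) by ring, abs_neg]
  rw [Gfun, Gfun, ← mul_sub, abs_mul, abs_of_pos (by positivity : (0 : ℝ) < 1 / π), one_div,
    inv_mul_eq_div]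
  gcongr

-- No integrability is assumed: a non-integrable side has Bochner integral `0`.
lemma norm_integral_sub_integral_le_of_norm_le_const {α E : Type*} [MeasurableSpace α]
    [NormedAddCommGroup E] [NormedSpace ℝ E] {μ : Measure α} [IsFiniteMeasure μ] {f g : α → E}
    {C : ℝ} (hf : ∀ᵐ x ∂μ, ‖f x‖ ≤ C) (hg : ∀ᵐ x ∂μ, ‖g x‖ ≤ C)
    (hfg : ∀ᵐ x ∂μ, ‖f x - g x‖ ≤ C) :
    ‖∫ x, f x ∂μ - ∫ x, g x ∂μ‖ ≤ C * μ.real Set.univ := by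
  by_cases h : Integrable f μ ∧ Integrable g μ
  · rw [← integral_sub h.1 h.2]
    exact norm_integral_le_of_norm_le_const hfg
  · rcases not_and_or.1 h with hf' | hg'
    · rw [integral_undef hf', zero_sub, norm_neg]
      exact norm_integral_le_of_norm_le_const hg
    · rw [integral_undef hg', sub_zero]
      exact norm_integral_le_of_norm_le_const hf

lemma abs_le_of_hasDerivAt_neg_mul_add {ρ C T t : ℝ} {v F : ℝ → ℝ} (hρ : 0 < ρ) (hT : T ≤ t)
    (hv : ∀ s ∈ Set.Icc T t, HasDerivAt v (-ρ * v s + F s) s)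
    (hF : ∀ s ∈ Set.Icc T t, |F s| ≤ C) :
    |v t| ≤ |v T| * exp (-(ρ * (t - T))) + C / ρ := by
  have hC : 0 ≤ C := (abs_nonneg _).trans (hF T ⟨le_rfl, hT⟩)
  have hexp (s : ℝ) : HasDerivAt (fun u => exp (ρ * u)) (ρ * exp (ρ * s)) s := by
    simpa [mul_comm] using ((hasDerivAt_id s).const_mul ρ).exp
  have hw : ∀ s ∈ Set.Icc T t,
      HasDerivAt (fun u => exp (ρ * u) * v u) (exp (ρ * s) * F s) s := fun s hs =>
    ((hexp s).mul (hv s hs)).congr_deriv (by ring)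
  set B : ℝ → ℝ := fun s => exp (ρ * T) * |v T| + C / ρ * (exp (ρ * s) - exp (ρ * T))
  have hB (s : ℝ) : HasDerivAt B (C * exp (ρ * s)) s :=
    (((hexp s).sub_const _).const_mul (C / ρ)).const_add _ |>.congr_deriv (by field_simp)
  have key := image_norm_le_of_norm_deriv_right_le_deriv_boundary
    (fun s hs => (hw s hs).continuousAt.continuousWithinAt)
    (fun s hs => (hw s (Set.Ico_subset_Icc_self hs)).hasDerivWithinAt)
    (by simp [B]) hB
    (fun s hs => by
      rw [norm_mul, Real.norm_eq_abs, Real.norm_eq_abs, abs_exp, mul_comm C]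
      exact mul_le_mul_of_nonneg_left (hF s (Set.Ico_subset_Icc_self hs)) (exp_pos _).le)
    ⟨hT, le_rfl⟩
  rw [norm_mul, Real.norm_eq_abs, Real.norm_eq_abs, abs_exp] at key
  have hsplit : exp (-(ρ * (t - T))) = exp (ρ * T) / exp (ρ * t) := by
    rw [← exp_sub]; ring_nf
  have hBt : B t ≤ exp (ρ * T) * |v T| + C / ρ * exp (ρ * t) := by
    have : 0 ≤ C / ρ * exp (ρ * T) := by positivity
    simp only [B]; linarith
  refine le_of_mul_le_mul_left ?_ (exp_pos (ρ * t))
  calc exp (ρ * t) * |v t| ≤ exp (ρ * T) * |v T| + C / ρ * exp (ρ * t) := key.trans hBt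
    _ = exp (ρ * t) * (|v T| * exp (-(ρ * (t - T))) + C / ρ) := by
      rw [hsplit]; field_simp

lemma eventually_forall_abs_le_of_hasDerivAt_neg_mul_add {ι : Type*} {S : Set ι}
    {v F : ι → ℝ → ℝ} {ρ C M T ε : ℝ} (hρ : 0 < ρ) (hε : 0 < ε)
    (hv : ∀ i ∈ S, ∀ t, T ≤ t → HasDerivAt (v i) (-ρ * v i t + F i t) t)
    (hF : ∀ i ∈ S, ∀ t, T ≤ t → |F i t| ≤ C) (hM : ∀ i ∈ S, |v i T| ≤ M) :
    ∀ᶠ t in atTop, ∀ i ∈ S, |v i t| ≤ C / ρ + ε := by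
  have hdecay : Tendsto (fun t => M * exp (-(ρ * (t - T)))) atTop (nhds 0) := by
    simpa [sub_eq_add_neg] using (tendsto_exp_neg_atTop_nhds_zero.comp
      ((tendsto_atTop_add_const_right _ (-T) tendsto_id).const_mul_atTop hρ)).const_mul M
  filter_upwards [eventually_ge_atTop T, hdecay.eventually (ge_mem_nhds hε)] with t hTt hsmall
    i hi
  have h := abs_le_of_hasDerivAt_neg_mul_add hρ hTt (fun s hs => hv i hi s hs.1)
    (fun s hs => hF i hi s hs.1)
  have : |v i T| * exp (-(ρ * (t - T))) ≤ M * exp (-(ρ * (t - T))) :=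
    mul_le_mul_of_nonneg_right (hM i hi) (exp_pos _).le
  linarith

/-- The alignment term `a (θ − α_d + α_c) ∫ 𝒢(|θ − φ|) f(dφ)` of `H[f]` at the point `g θ` of
the configuration `g`, with `f` the push-forward of `μ` by `g`. -/
noncomputable def alignmentForce (a αd αc : ℝ) (μ : Measure ℝ) (g : ℝ → ℝ) (θ : ℝ) : ℝ :=
  a * (g θ - αd + αc) * ∫ ψ, Gfun |g θ - g ψ| ∂μ

section AlignmentForce

variable {a αd αc R : ℝ} {μ : Measure ℝ} [IsFiniteMeasure μ] {S : Set ℝ} {g : ℝ → ℝ}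

lemma abs_Gfun_sub_le_of_mem (hg : ∀ ψ ∈ S, |g ψ - αd| ≤ π) {θ ψ : ℝ} (hθ : θ ∈ S)
    (hψ : ψ ∈ S) : |Gfun (|g θ - g ψ|)| ≤ min 1 (|g θ - g ψ| / π) := by
  have h2 : |g θ - g ψ| ≤ 2 * π := by
    have := hg θ hθ; have := hg ψ hψ
    rw [abs_le] at *; constructor <;> linarith
  rw [abs_of_nonneg (Gfun_nonneg (abs_nonneg _) h2)]
  exact le_min (Gfun_le_one _) (Gfun_le_div_pi _)

lemma abs_sub_add_le_of_mem (hg : ∀ ψ ∈ S, |g ψ - αd| ≤ π) {θ : ℝ} (hθ : θ ∈ S) :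
    |g θ - αd + αc| ≤ π + |αc| := by
  linarith [abs_add_le (g θ - αd) αc, hg θ hθ]

lemma abs_Gfun_sub_le_div_pi_of_mem (hg : ∀ ψ ∈ S, |g ψ - αd| ≤ π)
    (hR : ∀ ψ ∈ S, ∀ χ ∈ S, |g ψ - g χ| ≤ R) {θ ψ : ℝ} (hθ : θ ∈ S) (hψ : ψ ∈ S) :
    |Gfun (|g θ - g ψ|)| ≤ R / π :=
  (abs_Gfun_sub_le_of_mem hg hθ hψ).trans
    ((min_le_right _ _).trans (div_le_div_of_nonneg_right (hR θ hθ ψ hψ) pi_pos.le))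

variable (hS : ∀ᵐ ψ ∂μ, ψ ∈ S) (hg : ∀ ψ ∈ S, |g ψ - αd| ≤ π)
  (hR : ∀ ψ ∈ S, ∀ χ ∈ S, |g ψ - g χ| ≤ R)
include hS hg

lemma abs_integral_Gfun_le_one {θ : ℝ} (hθ : θ ∈ S) :
    |∫ ψ, Gfun |g θ - g ψ| ∂μ| ≤ 1 * μ.real Set.univ := by
  rw [← Real.norm_eq_abs]
  refine norm_integral_le_of_norm_le_const ?_
  filter_upwards [hS] with ψ hψ
  rw [Real.norm_eq_abs]
  exact (abs_Gfun_sub_le_of_mem hg hθ hψ).trans (min_le_left _ _)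

include hR

lemma abs_integral_Gfun_le {θ : ℝ} (hθ : θ ∈ S) :
    |∫ ψ, Gfun |g θ - g ψ| ∂μ| ≤ R / π * μ.real Set.univ := by
  rw [← Real.norm_eq_abs]
  refine norm_integral_le_of_norm_le_const ?_
  filter_upwards [hS] with ψ hψ
  rw [Real.norm_eq_abs]
  exact abs_Gfun_sub_le_div_pi_of_mem hg hR hθ hψ

lemma abs_integral_Gfun_sub_le {θ φ : ℝ} (hθ : θ ∈ S) (hφ : φ ∈ S) :
    |∫ ψ, Gfun |g θ - g ψ| ∂μ - ∫ ψ, Gfun |g φ - g ψ| ∂μ| ≤ R / π * μ.real Set.univ := by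
  rw [← Real.norm_eq_abs]
  refine norm_integral_sub_integral_le_of_norm_le_const ?_ ?_ ?_ <;>
    filter_upwards [hS] with ψ hψ <;> rw [Real.norm_eq_abs]
  · exact abs_Gfun_sub_le_div_pi_of_mem hg hR hθ hψ
  · exact abs_Gfun_sub_le_div_pi_of_mem hg hR hφ hψ
  · refine (abs_Gfun_sub_le _ _).trans ?_
    gcongr
    exact (abs_abs_sub_abs_le_abs_sub _ _).trans (by simpa using hR θ hθ φ hφ)

lemma abs_alignmentForce_le (ha : 0 ≤ a) {θ : ℝ} (hθ : θ ∈ S) :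
    |alignmentForce a αd αc μ g θ| ≤ a * (2 * π + |αc|) / π * R * μ.real Set.univ := by
  have hR0 : 0 ≤ R := (abs_nonneg _).trans (hR θ hθ θ hθ)
  calc |alignmentForce a αd αc μ g θ|
      = a * |g θ - αd + αc| * |∫ ψ, Gfun |g θ - g ψ| ∂μ| := by
        rw [alignmentForce, abs_mul, abs_mul, abs_of_nonneg ha]
    _ ≤ a * (π + |αc|) * (R / π * μ.real Set.univ) := by
        gcongr
        · exact abs_sub_add_le_of_mem hg hθ
        · exact abs_integral_Gfun_le hS hg hR hθ
    _ = a * (π + |αc|) / π * R * μ.real Set.univ := by ring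
    _ ≤ a * (2 * π + |αc|) / π * R * μ.real Set.univ := by
        gcongr; linarith [pi_pos]

lemma abs_alignmentForce_sub_alignmentForce_le (ha : 0 ≤ a) {θ φ : ℝ} (hθ : θ ∈ S)
    (hφ : φ ∈ S) :
    |alignmentForce a αd αc μ g θ - alignmentForce a αd αc μ g φ|
      ≤ a * (2 * π + |αc|) / π * R * μ.real Set.univ := by
  set J := fun x => ∫ ψ, Gfun |g x - g ψ| ∂μ
  have hsplit : alignmentForce a αd αc μ g θ - alignmentForce a αd αc μ g φ
      = a * (g θ - g φ) * J θ + a * (g φ - αd + αc) * (J θ - J φ) := by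
    simp only [alignmentForce, J]; ring
  calc |alignmentForce a αd αc μ g θ - alignmentForce a αd αc μ g φ|
      ≤ a * |g θ - g φ| * |J θ| + a * |g φ - αd + αc| * |J θ - J φ| := by
        rw [hsplit]
        refine (abs_add_le _ _).trans_eq ?_
        simp only [abs_mul, abs_of_nonneg ha]
    _ ≤ a * R * (1 * μ.real Set.univ) + a * (π + |αc|) * (R / π * μ.real Set.univ) := by
        have haR : 0 ≤ a * R := mul_nonneg ha ((abs_nonneg _).trans (hR θ hθ θ hθ))
        have hθφ := hR θ hθ φ hφ
        have hJθ := abs_integral_Gfun_le_one hS hg hθ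
        have hφ' := abs_sub_add_le_of_mem (αc := αc) hg hφ
        have hJθφ := abs_integral_Gfun_sub_le hS hg hR hθ hφ
        gcongr
    _ = a * (2 * π + |αc|) / π * R * μ.real Set.univ := by
        field_simp; ring

end AlignmentForce

section Characteristics

variable {αd αc ρ a : ℝ} {f₀ : Measure ℝ} [IsFiniteMeasure f₀] {S : Set ℝ} {γ : ℝ → ℝ → ℝ}
  (hρ : 0 < ρ) (ha : 0 ≤ a) (hS : ∀ᵐ ψ ∂f₀, ψ ∈ S) (hmass : f₀.real Set.univ = ρ)
  (hval : ∀ θ ∈ S, ∀ t, 0 ≤ t → |γ t θ - αd| ≤ π)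
  (hode : ∀ θ ∈ S, ∀ t, 0 ≤ t → HasDerivAt (fun s => γ s θ)
    (-ρ * (γ t θ - αd) + alignmentForce a αd αc f₀ (γ t) θ) t)
include hρ ha hS hmass hval hode

lemma eventually_abs_sub_le_mul {q R : ℝ} (hR : 0 < R) (hq : a * (2 * π + |αc|) / π < q)
    (h : ∀ᶠ t in atTop, ∀ θ ∈ S, ∀ φ ∈ S, |γ t θ - γ t φ| ≤ R) :
    ∀ᶠ t in atTop, ∀ θ ∈ S, ∀ φ ∈ S, |γ t θ - γ t φ| ≤ q * R := by
  obtain ⟨T, hT⟩ := eventually_atTop.1 (h.and (eventually_ge_atTop 0))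
  set k := a * (2 * π + |αc|) / π
  have hpair := eventually_forall_abs_le_of_hasDerivAt_neg_mul_add (S := S ×ˢ S)
    (v := fun p t => γ t p.1 - γ t p.2)
    (F := fun p t => alignmentForce a αd αc f₀ (γ t) p.1 - alignmentForce a αd αc f₀ (γ t) p.2)
    (C := k * R * ρ) (M := R) (T := T) (ε := (q - k) * R) hρ (mul_pos (by linarith) hR)
    (fun p hp t ht =>
      ((hode p.1 hp.1 t (hT t ht).2).sub (hode p.2 hp.2 t (hT t ht).2)).congr_deriv (by ring))
    (fun p hp t ht => hmass ▸ abs_alignmentForce_sub_alignmentForce_le hS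
      (fun ψ hψ => hval ψ hψ t (hT t ht).2) (hT t ht).1 ha hp.1 hp.2)
    (fun p hp => (hT T le_rfl).1 p.1 hp.1 p.2 hp.2)
  filter_upwards [hpair] with t ht θ hθ φ hφ
  calc |γ t θ - γ t φ| ≤ k * R * ρ / ρ + (q - k) * R := ht (θ, φ) ⟨hθ, hφ⟩
    _ = q * R := by field_simp; ring

lemma eventually_abs_sub_le (hq : a * (2 * π + |αc|) / π < 1) {R : ℝ} (hR : 0 < R) :
    ∀ᶠ t in atTop, ∀ θ ∈ S, ∀ φ ∈ S, |γ t θ - γ t φ| ≤ R := by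
  obtain ⟨q, hkq, hq1⟩ := exists_between hq
  have hq0 : 0 < q := lt_of_le_of_lt (by positivity) hkq
  have hdiam (n : ℕ) : ∀ᶠ t in atTop, ∀ θ ∈ S, ∀ φ ∈ S, |γ t θ - γ t φ| ≤ 2 * π * q ^ n := by
    induction n with
    | zero =>
      filter_upwards [eventually_ge_atTop 0] with t ht θ hθ φ hφ
      have := hval θ hθ t ht; have := hval φ hφ t ht
      rw [abs_le] at *; constructor <;> linarith
    | succ n ih =>
      simpa [pow_succ, mul_comm q, mul_assoc] using
        eventually_abs_sub_le_mul hρ ha hS hmass hval hode (by positivity) hkq ih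
  obtain ⟨n, hn⟩ := exists_pow_lt_of_lt_one (div_pos hR two_pi_pos) hq1
  filter_upwards [hdiam n] with t ht θ hθ φ hφ
  calc |γ t θ - γ t φ| ≤ 2 * π * q ^ n := ht θ hθ φ hφ
    _ ≤ R := by rw [lt_div_iff₀' two_pi_pos] at hn; exact hn.le

lemma tendsto_abs_sub_nhds_zero (hq : a * (2 * π + |αc|) / π < 1) {θ : ℝ} (hθ : θ ∈ S) :
    Tendsto (fun t => |γ t θ - αd|) atTop (nhds 0) := by
  rw [Metric.tendsto_nhds]
  intro ε hε
  obtain ⟨T, hT⟩ := eventually_atTop.1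
    ((eventually_abs_sub_le hρ ha hS hmass hval hode hq (by positivity : 0 < ε / 4)).and
      (eventually_ge_atTop 0))
  have hpoint := eventually_forall_abs_le_of_hasDerivAt_neg_mul_add (S := S)
    (v := fun θ t => γ t θ - αd) (F := fun θ t => alignmentForce a αd αc f₀ (γ t) θ)
    (C := a * (2 * π + |αc|) / π * (ε / 4) * ρ) (M := π) (T := T) (ε := ε / 4) hρ
    (by positivity) (fun θ hθ t ht => (hode θ hθ t (hT t ht).2).sub_const αd)
    (fun θ hθ t ht => hmass ▸ abs_alignmentForce_le hS
      (fun ψ hψ => hval ψ hψ t (hT t ht).2) (hT t ht).1 ha hθ)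
    (fun θ hθ => hval θ hθ T (hT T le_rfl).2)
  filter_upwards [hpoint] with t ht
  rw [Real.dist_eq, sub_zero, abs_abs]
  calc |γ t θ - αd| ≤ a * (2 * π + |αc|) / π * (ε / 4) * ρ / ρ + ε / 4 := ht θ hθ
    _ = a * (2 * π + |αc|) / π * (ε / 4) + ε / 4 := by field_simp
    _ < ε := by nlinarith

end Characteristics

lemma mul_two_pi_add_abs_div_pi_lt_one {a αc : ℝ} (ha : 0 < a) (h : |αc| < π * (1 / a - 2)) :
    a * (2 * π + |αc|) / π < 1 := by
  rw [div_lt_one pi_pos]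
  have := mul_lt_mul_of_pos_left h ha
  have hsimp : a * (π * (1 / a - 2)) = π - 2 * π * a := by field_simp
  linarith

theorem stmt_7_general (αd αc : ℝ)
    (ρ a : ℝ) (hρ : 0 < ρ) (ha : 0 < a)
    (hcond : |αc| < π * (1 / a - 2))
    (f₀ : Measure ℝ)
    (hsupp : f₀ (Set.Ico (-π + αd) (π + αd))ᶜ = 0)
    (hmass : f₀ Set.univ = ENNReal.ofReal ρ)
    (γ : ℝ → ℝ → ℝ)
    (hval : ∀ θ ∈ Set.Ico (-π + αd) (π + αd), ∀ t, 0 ≤ t →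
      γ t θ ∈ Set.Ico (-π + αd) (π + αd))
    -- the characteristic ODE of the mean-field model:
    (hode : ∀ θ ∈ Set.Ico (-π + αd) (π + αd), ∀ t, 0 ≤ t →
      HasDerivAt (fun s => γ s θ)
        (-ρ * (γ t θ - αd)
          + a * (γ t θ - αd + αc) * ∫ φ, Gfun |γ t θ - γ t φ| ∂f₀) t) :
    ∀ θ ∈ Set.Ico (-π + αd) (π + αd),
      Tendsto (fun t => |γ t θ - αd|) atTop (nhds 0) := by
  have : IsFiniteMeasure f₀ := ⟨by simp [hmass]⟩
  have hdist : ∀ θ ∈ Set.Ico (-π + αd) (π + αd), ∀ t, 0 ≤ t → |γ t θ - αd| ≤ π :=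
    fun θ hθ t ht => abs_le.2 ⟨by linarith [(hval θ hθ t ht).1], by linarith [(hval θ hθ t ht).2]⟩
  exact fun θ hθ => tendsto_abs_sub_nhds_zero hρ ha.le (ae_iff.2 hsupp)
    (by simp [measureReal_def, hmass, hρ.le]) hdist hode
    (mul_two_pi_add_abs_div_pi_lt_one ha hcond) hθ

/-- If `|α_c| < π(1/a − 2)` then every characteristic of the mean-field model converges
to the desired direction: `|γ_t(θ) − α_d| → 0` as `t → +∞`, for every `θ ∈ I`. -/
theorem stmt_7 (αd αc : ℝ) (hαd : αd ∈ Set.Ico (-π) π) (hαc : αc ∈ Set.Ico (-π) π)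
    (ρ a : ℝ) (hρ : 0 < ρ) (hρ1 : ρ ≤ 1) (ha : 0 < a) (ha1 : a ≤ 1)
    (hcond : |αc| < π * (1 / a - 2))
    (f₀ : Measure ℝ)
    (hsupp : f₀ (Set.Ico (-π + αd) (π + αd))ᶜ = 0)
    (hmass : f₀ Set.univ = ENNReal.ofReal ρ)
    (γ : ℝ → ℝ → ℝ)
    (hval : ∀ θ ∈ Set.Ico (-π + αd) (π + αd), ∀ t, 0 ≤ t →
      γ t θ ∈ Set.Ico (-π + αd) (π + αd))
    (hinit : ∀ θ ∈ Set.Ico (-π + αd) (π + αd), γ 0 θ = θ)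
    -- the characteristic ODE of the mean-field model:
    (hode : ∀ θ ∈ Set.Ico (-π + αd) (π + αd), ∀ t, 0 ≤ t →
      HasDerivAt (fun s => γ s θ)
        (-ρ * (γ t θ - αd)
          + a * (γ t θ - αd + αc) * ∫ φ, Gfun |γ t θ - γ t φ| ∂f₀) t) :
    ∀ θ ∈ Set.Ico (-π + αd) (π + αd),
      Tendsto (fun t => |γ t θ - αd|) atTop (nhds 0) :=
  stmt_7_general αd αc ρ a hρ ha hcond f₀ hsupp hmass γ hval hode
end
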